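/- arXiv:1003.5621 — 2 statements merged into one kernel-verified Lean document; each statement's English description precedes it below -/
import Mathlib

section
/- In any ε-chain in a compact metric space X of length n ≥ 2·pack_ε(X), there exist indices i < j with j − i > 1 and |xᵢ xⱼ| ≤ ε; consequently any ε-chain can be shortened to one with fewer than 2·pack_ε(X) steps without increasing ∑ |f(x_{i-1}) f(xᵢ)| for any map f into a metric space. -/
open Filter
open scoped ENNReal

section PullDefs
variable {X Y : Type*} [MetricSpace X] [MetricSpace Y]

/-- `c 0, …, c n` is an `ε`-chain from `x` to `x'`. -/
def IsEpsChain (ε : ℝ) (n : ℕ) (c : ℕ → X) (x x' : X) : Prop :=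
  c 0 = x ∧ c n = x' ∧ ∀ i < n, dist (c i) (c (i + 1)) ≤ ε

/-- `pull_{f,ε}(x,x')`: infimum over `ε`-chains of the sum of image distances. -/
noncomputable def pullEps (f : X → Y) (ε : ℝ) (x x' : X) : ℝ≥0∞ :=
  ⨅ (n : ℕ) (c : ℕ → X) (_ : IsEpsChain ε n c x x'),
    ∑ i ∈ Finset.range n, edist (f (c i)) (f (c (i + 1)))

/-- `pull_f(x,x') = lim_{ε→0+} pull_{f,ε}(x,x') = sup_{ε>0} pull_{f,ε}(x,x')`. -/
noncomputable def pullMet (f : X → Y) (x x' : X) : ℝ≥0∞ :=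
  ⨆ (ε : ℝ) (_ : 0 < ε), pullEps f ε x x'

/-- `f` is an intrinsic isometry if the pulled-back metric coincides with the metric of `X`. -/
def IsIntrinsicIsometry (f : X → Y) : Prop :=
  Continuous f ∧ ∀ x x', edist x x' = pullMet f x x'

end PullDefs

/-- `pack_ε(X)`: maximal number of points at pairwise distance `> ε`. -/
noncomputable def packNum (X : Type*) [MetricSpace X] (ε : ℝ) : ℕ :=
  sSup {n | ∃ s : Finset X, s.card = n ∧ ∀ x ∈ s, ∀ y ∈ s, x ≠ y → ε < dist x y}

/-!
With `p = pack_ε X`, two of the `p + 1` points `c 0, c 2, …, c (2p)` are within `ε` of each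
other, and they are at least two steps apart: a shortcut. Cutting a chain along a shortcut keeps
it an `ε`-chain, and by the triangle inequality passing to a subchain (a monotone reindexing)
never increases the length of the image chain. A shortest `ε`-subchain from `c 0` to `c n`
therefore has no shortcut, hence fewer than `2p` steps.
-/

open Finset

section Packing

variable {X : Type*} [MetricSpace X] [CompactSpace X] {ε : ℝ}

lemma bddAbove_card_separated (hε : 0 < ε) :
    BddAbove {n | ∃ s : Finset X, s.card = n ∧ ∀ x ∈ s, ∀ y ∈ s, x ≠ y → ε < dist x y} := by
  obtain ⟨t, htf, hcov⟩ :=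
    Metric.totallyBounded_iff.1 (isCompact_univ (X := X)).totallyBounded (ε / 2) (half_pos hε)
  have hnet : ∀ x : X, ∃ y ∈ htf.toFinset, dist x y < ε / 2 := by
    intro x
    obtain ⟨y, hy, hxy⟩ := Set.mem_iUnion₂.1 (hcov (Set.mem_univ x))
    exact ⟨y, htf.mem_toFinset.2 hy, hxy⟩
  choose g hgt hgx using hnet
  refine ⟨htf.toFinset.card, ?_⟩
  rintro _ ⟨s, rfl, hs⟩
  refine Finset.card_le_card_of_injOn g (fun x _ => hgt x) fun x hx y hy hxy => ?_
  by_contra hne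
  have hgxy := hgx x
  rw [hxy] at hgxy
  linarith [hs x hx y hy hne, dist_triangle_right x y (g y), hgx y]

lemma card_le_packNum (hε : 0 < ε) {s : Finset X}
    (hs : ∀ x ∈ s, ∀ y ∈ s, x ≠ y → ε < dist x y) : s.card ≤ packNum X ε :=
  le_csSup (bddAbove_card_separated hε) ⟨s, rfl, hs⟩

lemma exists_lt_le_packNum_dist_le (hε : 0 < ε) (g : ℕ → X) :
    ∃ t s, t < s ∧ s ≤ packNum X ε ∧ dist (g t) (g s) ≤ ε := by
  classical
  by_contra! hfar
  have hsep : ∀ t ∈ range (packNum X ε + 1), ∀ s ∈ range (packNum X ε + 1), t ≠ s →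
      ε < dist (g t) (g s) := by
    intro t ht s hs hts
    rw [mem_range] at ht hs
    rcases hts.lt_or_gt with h | h
    · exact hfar t s h (by omega)
    · rw [dist_comm]; exact hfar s t h (by omega)
  have hinj : Set.InjOn g (range (packNum X ε + 1)) := fun t ht s hs hgts => by
    by_contra hts
    have := hsep t ht s hs hts
    rw [hgts, dist_self] at this
    linarith
  have hcard := card_le_packNum hε (s := (range (packNum X ε + 1)).image g) <| by
    simp only [mem_image]
    rintro _ ⟨t, ht, rfl⟩ _ ⟨s, hs, rfl⟩ hne
    exact hsep t ht s hs fun h => hne (h ▸ rfl)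
  rw [card_image_of_injOn hinj, card_range] at hcard
  omega

lemma exists_shortcut (hε : 0 < ε) (c : ℕ → X) {n : ℕ} (hn : 2 * packNum X ε ≤ n) :
    ∃ i j : ℕ, i < j ∧ 1 < j - i ∧ j ≤ n ∧ dist (c i) (c j) ≤ ε := by
  obtain ⟨t, s, hts, hs, hdist⟩ := exists_lt_le_packNum_dist_le hε fun k => c (2 * k)
  exact ⟨2 * t, 2 * s, by omega, by omega, by omega, hdist⟩

end Packing

section Reindexing

def skipAfter (i d k : ℕ) : ℕ := if k ≤ i then k else k + d

variable {i d k : ℕ}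

lemma skipAfter_of_le (h : k ≤ i) : skipAfter i d k = k := if_pos h

lemma skipAfter_of_lt (h : i < k) : skipAfter i d k = k + d := if_neg h.not_ge

lemma monotone_skipAfter (i d : ℕ) : Monotone (skipAfter i d) := by
  intro k l hkl
  unfold skipAfter
  split_ifs <;> omega

lemma chain_skipAfter {α : Type*} {r : α → α → Prop} {c : ℕ → α} {n : ℕ}
    (hc : ∀ k < n, r (c k) (c (k + 1))) (hshort : r (c i) (c (i + d + 1))) (hin : i + d < n) :
    ∀ k < n - d, r (c (skipAfter i d k)) (c (skipAfter i d (k + 1))) := by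
  intro k hk
  rcases lt_trichotomy k i with h | rfl | h
  · rw [skipAfter_of_le h.le, skipAfter_of_le h]
    exact hc k (by omega)
  · rwa [skipAfter_of_le le_rfl, skipAfter_of_lt (Nat.lt_add_one k), Nat.add_right_comm]
  · rw [skipAfter_of_lt h, skipAfter_of_lt (h.trans (Nat.lt_add_one k)), Nat.add_right_comm]
    exact hc (k + d) (by omega)

lemma sum_edist_comp_le_of_monotone {E : Type*} [PseudoEMetricSpace E] (u : ℕ → E)
    {φ : ℕ → ℕ} (hφ : Monotone φ) (m : ℕ) :
    ∑ k ∈ range m, edist (u (φ k)) (u (φ (k + 1))) ≤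
      ∑ k ∈ Ico (φ 0) (φ m), edist (u k) (u (k + 1)) := by
  induction m with
  | zero => simp
  | succ m ih =>
    rw [sum_range_succ, ← sum_Ico_consecutive _ (hφ m.zero_le) (hφ m.le_succ)]
    exact add_le_add ih (edist_le_Ico_sum_edist _ (hφ m.le_succ))

end Reindexing

lemma exists_monotone_subchain_lt_two_mul_packNum {X : Type*} [MetricSpace X] [CompactSpace X]
    {ε : ℝ} (hε : 0 < ε) {n : ℕ} {c : ℕ → X} (hc : ∀ i < n, dist (c i) (c (i + 1)) ≤ ε) :
    ∃ (m : ℕ) (φ : ℕ → ℕ), Monotone φ ∧ φ 0 = 0 ∧ φ m = n ∧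
      (∀ k < m, dist (c (φ k)) (c (φ (k + 1))) ≤ ε) ∧ m < 2 * packNum X ε := by
  classical
  have hsub : ∃ m, ∃ φ : ℕ → ℕ, Monotone φ ∧ φ 0 = 0 ∧ φ m = n ∧
      ∀ k < m, dist (c (φ k)) (c (φ (k + 1))) ≤ ε := ⟨n, id, monotone_id, rfl, rfl, hc⟩
  obtain ⟨φ, hφ, h0, hend, hchain⟩ := Nat.find_spec hsub
  refine ⟨Nat.find hsub, φ, hφ, h0, hend, hchain, ?_⟩
  by_contra! hlong
  obtain ⟨i, j, hij, hji, hj, hshort⟩ := exists_shortcut hε (c ∘ φ) hlong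
  have hcut : i + (j - i - 1) + 1 = j := by omega
  have hshorter := Nat.find_min' hsub (m := Nat.find hsub - (j - i - 1))
    ⟨φ ∘ skipAfter i (j - i - 1), hφ.comp (monotone_skipAfter _ _),
      by simp [skipAfter_of_le, h0],
      by rw [Function.comp_apply, skipAfter_of_lt (by omega), Nat.sub_add_cancel (by omega), hend],
      chain_skipAfter (r := fun x y => dist x y ≤ ε) hchain (by rwa [hcut]) (by omega)⟩
  omega

/-- an `ε`-chain with at least `2·pack_ε(X)` steps has a shortcut
(`i < j`, `j - i > 1`, `dist (c i) (c j) ≤ ε`); consequently any `ε`-chain can be replaced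
by one with fewer than `2·pack_ε(X)` steps, without increasing `∑ |f(x_{i-1}) f(x_i)|`. -/
theorem epsChain_shortcut {X Y : Type*} [MetricSpace X] [CompactSpace X] [MetricSpace Y]
    (f : X → Y) (ε : ℝ) (hε : 0 < ε) (n : ℕ) (c : ℕ → X)
    (hc : ∀ i < n, dist (c i) (c (i + 1)) ≤ ε) :
    (2 * packNum X ε ≤ n →
      ∃ i j : ℕ, i < j ∧ 1 < j - i ∧ j ≤ n ∧ dist (c i) (c j) ≤ ε) ∧
    (∃ (m : ℕ) (c' : ℕ → X), c' 0 = c 0 ∧ c' m = c n ∧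
      (∀ i < m, dist (c' i) (c' (i + 1)) ≤ ε) ∧ m < 2 * packNum X ε ∧
      ∑ i ∈ Finset.range m, edist (f (c' i)) (f (c' (i + 1))) ≤
        ∑ i ∈ Finset.range n, edist (f (c i)) (f (c (i + 1)))) := by
  refine ⟨exists_shortcut hε c, ?_⟩
  obtain ⟨m, φ, hφ, h0, hend, hchain, hm⟩ := exists_monotone_subchain_lt_two_mul_packNum hε hc
  refine ⟨m, c ∘ φ, by simp [h0], by simp [hend], hchain, hm, ?_⟩
  have hsum := sum_edist_comp_le_of_monotone (f ∘ c) hφ m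
  rwa [h0, hend, ← range_eq_Ico] at hsum
end

section
/- Let X be a compact metric space admitting an intrinsic isometry f : X → Y into some metric space Y. Then the metric on X is a length metric (intrinsic metric): for all x, x' ∈ X and every ε > 0 there exists a finite chain x = x₀, …, xₙ = x' with ∑ |x_{i-1} xᵢ| ≤ |x x'| + ε and each |x_{i-1} xᵢ| ≤ ε. -/
/-! By compactness of `X × X`, `pullEps f δ` converges to the metric uniformly as `δ → 0`: near
a pair `(a, b)` the triangle inequality for `pullEps f δ` shows that it moves by at most the
displacement of the endpoints. Fix `η` and `δ` accordingly and take a `δ`-chain from `x` to `x'`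
whose image has length at most `|x x'| + η`. Keeping only the points where the image length
crosses a multiple of `ε / 2` leaves about `2 |x x'| / ε` points; consecutive ones are at distance
at most `ε / 2 + δ + η`, and the errors `η` add up to at most `ε`. -/

open Filter
open scoped ENNReal

open Finset Topology

def chainAppend {X : Type*} (n : ℕ) (c c' : ℕ → X) (i : ℕ) : X :=
  if i ≤ n then c i else c' (i - n)

lemma chainAppend_add {X : Type*} {n : ℕ} {c c' : ℕ → X} (h : c n = c' 0) (i : ℕ) :
    chainAppend n c c' (n + i) = c' i := by
  rcases i with _ | i
  · simp [chainAppend, h]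
  · simp [chainAppend]

lemma sum_range_chainAppend {X M : Type*} [AddCommMonoid M] (F : X → X → M) {n m : ℕ}
    {c c' : ℕ → X} (h : c n = c' 0) :
    ∑ i ∈ range (n + m), F (chainAppend n c c' i) (chainAppend n c c' (i + 1)) =
      ∑ i ∈ range n, F (c i) (c (i + 1)) + ∑ i ∈ range m, F (c' i) (c' (i + 1)) := by
  rw [sum_range_add]
  congr 1
  · refine sum_congr rfl fun i hi => ?_
    have hi : i < n := mem_range.mp hi
    simp [chainAppend, hi.le, Nat.succ_le_of_lt hi]
  · refine sum_congr rfl fun i _ => ?_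
    rw [add_assoc, chainAppend_add h, chainAppend_add h]

lemma sum_edist_eq_ofReal_sum_dist {X ι : Type*} [PseudoMetricSpace X] (s : Finset ι)
    (g h : ι → X) :
    ∑ i ∈ s, edist (g i) (h i) = ENNReal.ofReal (∑ i ∈ s, dist (g i) (h i)) := by
  rw [ENNReal.ofReal_sum_of_nonneg fun _ _ => dist_nonneg]
  simp only [edist_dist]

section Chains
variable {X Y : Type*} [MetricSpace X] [MetricSpace Y] {f : X → Y} {ε : ℝ}

lemma pullEps_le_sum {n : ℕ} {c : ℕ → X} {x x' : X} (hc : IsEpsChain ε n c x x') :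
    pullEps f ε x x' ≤ ∑ i ∈ range n, edist (f (c i)) (f (c (i + 1))) :=
  iInf₂_le_of_le n c (iInf_le _ hc)

lemma pullEps_self (x : X) : pullEps f ε x x = 0 :=
  nonpos_iff_eq_zero.mp <| (pullEps_le_sum (n := 0) (c := fun _ => x) ⟨rfl, rfl, by simp⟩).trans
    (by simp)

lemma pullEps_le_edist_of_dist_le {x x' : X} (h : dist x x' ≤ ε) :
    pullEps f ε x x' ≤ edist (f x) (f x') :=
  (pullEps_le_sum (n := 1) (c := fun i => if i = 0 then x else x')
    ⟨rfl, rfl, by simpa using h⟩).trans (by simp)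

lemma edist_le_pullEps (x x' : X) : edist (f x) (f x') ≤ pullEps f ε x x' := by
  refine le_iInf₂ fun n c => le_iInf fun hc => ?_
  simpa [hc.1, hc.2.1] using edist_le_range_sum_edist (f ∘ c) n

lemma pullEps_anti {ε' : ℝ} (h : ε ≤ ε') (x x' : X) : pullEps f ε' x x' ≤ pullEps f ε x x' :=
  le_iInf₂ fun _ _ => le_iInf fun hc =>
    pullEps_le_sum ⟨hc.1, hc.2.1, fun i hi => (hc.2.2 i hi).trans h⟩

lemma pullEps_le_pullMet (hε : 0 < ε) (x x' : X) : pullEps f ε x x' ≤ pullMet f x x' :=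
  le_iSup₂ (f := fun (δ : ℝ) (_ : 0 < δ) => pullEps f δ x x') ε hε

lemma IsEpsChain.append {n m : ℕ} {c c' : ℕ → X} {x y z : X} (hc : IsEpsChain ε n c x y)
    (hc' : IsEpsChain ε m c' y z) : IsEpsChain ε (n + m) (chainAppend n c c') x z := by
  have hj : c n = c' 0 := hc.2.1.trans hc'.1.symm
  refine ⟨by simp [chainAppend, hc.1], by rw [chainAppend_add hj, hc'.2.1], fun i hi => ?_⟩
  rcases lt_or_ge i n with hin | hni
  · simpa [chainAppend, hin.le, Nat.succ_le_of_lt hin] using hc.2.2 i hin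
  · obtain ⟨k, rfl⟩ := Nat.exists_eq_add_of_le hni
    rw [add_assoc, chainAppend_add hj, chainAppend_add hj]
    exact hc'.2.2 k (by omega)

lemma pullEps_triangle (x y z : X) : pullEps f ε x z ≤ pullEps f ε x y + pullEps f ε y z := by
  simp only [pullEps, ENNReal.iInf_add, ENNReal.add_iInf]
  refine le_iInf₂ fun m c₂ => le_iInf fun hc₂ => le_iInf₂ fun n c₁ => le_iInf fun hc₁ => ?_
  rw [← sum_range_chainAppend (fun a b => edist (f a) (f b)) (hc₁.2.1.trans hc₂.1.symm)]
  exact pullEps_le_sum (hc₁.append hc₂)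

lemma pullEps_le_sum_Ico {c : ℕ → X} {p q : ℕ} (hc : ∀ i < q, dist (c i) (c (i + 1)) ≤ ε)
    (hpq : p ≤ q) : pullEps f ε (c p) (c q) ≤ ∑ i ∈ Ico p q, edist (f (c i)) (f (c (i + 1))) := by
  induction q, hpq using Nat.le_induction with
  | base => simp [pullEps_self]
  | succ q hpq ih =>
    rw [sum_Ico_succ_top hpq]
    exact (pullEps_triangle _ (c q) _).trans <| add_le_add (ih fun i hi => hc i (by omega))
      (pullEps_le_edist_of_dist_le (hc q q.lt_succ_self))

end Chains

namespace IsIntrinsicIsometry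
variable {X Y : Type*} [MetricSpace X] [MetricSpace Y] {f : X → Y}

lemma lipschitzWith (hf : IsIntrinsicIsometry f) : LipschitzWith 1 f :=
  .of_edist_le fun x x' => (hf.2 x x').symm ▸
    (edist_le_pullEps (ε := 1) x x').trans (pullEps_le_pullMet one_pos x x')

lemma pullEps_le_edist (hf : IsIntrinsicIsometry f) {ε : ℝ} (hε : 0 < ε) (x x' : X) :
    pullEps f ε x x' ≤ edist x x' :=
  (hf.2 x x').symm ▸ pullEps_le_pullMet hε x x'

lemma exists_edist_le_pullEps_add (hf : IsIntrinsicIsometry f) (x x' : X) {η : ℝ≥0∞}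
    (hη : η ≠ 0) : ∃ δ > 0, edist x x' ≤ pullEps f δ x x' + η := by
  rcases eq_or_ne (edist x x') 0 with h0 | h0
  · exact ⟨1, one_pos, by simp [h0]⟩
  have hlt : edist x x' - η < pullMet f x x' :=
    hf.2 x x' ▸ ENNReal.sub_lt_self (edist_ne_top _ _) h0 hη
  simp only [pullMet, lt_iSup_iff] at hlt
  obtain ⟨δ, hδ, hlt⟩ := hlt
  exact ⟨δ, hδ, tsub_le_iff_right.mp hlt.le⟩

lemma eventually_edist_le_pullEps_add (hf : IsIntrinsicIsometry f) {η : ℝ} (hη : 0 < η)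
    (q : X × X) : ∀ᶠ z : ℝ × (X × X) in 𝓝 (0, q),
      edist z.2.1 z.2.2 ≤ pullEps f z.1 z.2.1 z.2.2 + ENNReal.ofReal η := by
  set e := ENNReal.ofReal (η / 8)
  have he : ENNReal.ofReal η = 8 * e := by
    rw [← ENNReal.ofReal_ofNat, ← ENNReal.ofReal_mul (by norm_num)]
    ring_nf
  obtain ⟨δ, hδ, hq⟩ := hf.exists_edist_le_pullEps_add q.1 q.2 (η := 4 * e) (by positivity)
  have hr : 0 < min δ (η / 8) := lt_min hδ (by positivity)
  filter_upwards [prod_mem_nhds (Iio_mem_nhds hδ) (Metric.ball_mem_nhds q hr)]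
  rintro ⟨δ', a, b⟩ ⟨hδ' : δ' < δ, hab⟩
  rw [Metric.mem_ball, Prod.dist_eq, max_lt_iff, lt_min_iff, lt_min_iff] at hab
  obtain ⟨⟨ha, ha'⟩, ⟨hb, hb'⟩⟩ := hab
  have hq' : pullEps f δ q.1 q.2 ≤ edist q.1 a + pullEps f δ' a b + edist b q.2 :=
    (pullEps_triangle _ b _).trans <| add_le_add ((pullEps_triangle _ a _).trans <|
      add_le_add (hf.pullEps_le_edist hδ _ _) (pullEps_anti hδ'.le a b))
      (hf.pullEps_le_edist hδ _ _)
  have hae : edist q.1 a ≤ e := by rw [edist_dist, dist_comm]; exact ENNReal.ofReal_le_ofReal ha'.le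
  have hbe : edist b q.2 ≤ e := by rw [edist_dist]; exact ENNReal.ofReal_le_ofReal hb'.le
  calc edist a b ≤ edist a q.1 + edist q.1 q.2 + edist q.2 b := edist_triangle4 _ _ _ _
    _ ≤ e + (e + pullEps f δ' a b + e + 4 * e) + e := by
      rw [edist_comm a, edist_comm q.2]
      gcongr
      exact hq.trans (by gcongr; exact hq'.trans (by gcongr))
    _ = pullEps f δ' a b + ENNReal.ofReal η := by rw [he]; ring

lemma eventually_forall_edist_le_pullEps_add [CompactSpace X] (hf : IsIntrinsicIsometry f)
    {η : ℝ} (hη : 0 < η) :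
    ∀ᶠ δ in 𝓝 0, ∀ a b : X, edist a b ≤ pullEps f δ a b + ENNReal.ofReal η :=
  (isCompact_univ.eventually_forall_of_forall_eventually
    (P := fun δ (q : X × X) => edist q.1 q.2 ≤ pullEps f δ q.1 q.2 + ENNReal.ofReal η)
    fun q _ => hf.eventually_edist_le_pullEps_add hη q).mono fun _ h a b => h (a, b) trivial

lemma exists_isEpsChain_sum_dist_le (hf : IsIntrinsicIsometry f) {δ η : ℝ} (hδ : 0 < δ)
    (hη : 0 < η) (x x' : X) : ∃ n c, IsEpsChain δ n c x x' ∧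
      ∑ i ∈ range n, dist (f (c i)) (f (c (i + 1))) ≤ dist x x' + η := by
  have hlt : pullEps f δ x x' < ENNReal.ofReal (dist x x' + η) :=
    (hf.pullEps_le_edist hδ x x').trans_lt <| by
      rw [edist_dist]; exact ENNReal.ofReal_lt_ofReal_iff'.mpr ⟨by linarith, by positivity⟩
  simp only [pullEps, iInf_lt_iff] at hlt
  obtain ⟨n, c, hc, hlt⟩ := hlt
  rw [sum_edist_eq_ofReal_sum_dist] at hlt
  exact ⟨n, c, hc, (ENNReal.ofReal_le_ofReal_iff (by positivity)).mp hlt.le⟩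

end IsIntrinsicIsometry

lemma dist_le_sum_Ico_dist_add {X Y : Type*} [MetricSpace X] [MetricSpace Y] {f : X → Y}
    {δ η : ℝ} (huni : ∀ a b : X, edist a b ≤ pullEps f δ a b + ENNReal.ofReal η) (hη : 0 ≤ η)
    {c : ℕ → X} {p q : ℕ} (hc : ∀ i < q, dist (c i) (c (i + 1)) ≤ δ) (hpq : p ≤ q) :
    dist (c p) (c q) ≤ ∑ i ∈ Ico p q, dist (f (c i)) (f (c (i + 1))) + η := by
  rw [← ENNReal.ofReal_le_ofReal_iff (by positivity), ← edist_dist,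
    ENNReal.ofReal_add (sum_nonneg fun _ _ => dist_nonneg) hη, ← sum_edist_eq_ofReal_sum_dist]
  exact (huni _ _).trans (by gcongr; exact pullEps_le_sum_Ico hc hpq)

lemma sum_range_sum_Ico_of_monotone {M : Type*} [AddCommMonoid M] (r : ℕ → M) {K : ℕ → ℕ}
    (hK : Monotone K) (m : ℕ) :
    ∑ j ∈ range m, ∑ i ∈ Ico (K j) (K (j + 1)), r i = ∑ i ∈ Ico (K 0) (K m), r i := by
  induction m with
  | zero => simp
  | succ m ih =>
    rw [sum_range_succ, ih, sum_Ico_consecutive _ (hK (Nat.zero_le m)) (hK m.le_succ)]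

/-- Greedy cutting: `K j` is the first index at which the partial sums reach `j * L`. -/
lemma exists_monotone_sum_Ico_le {r : ℕ → ℝ} {n m : ℕ} {δ L : ℝ} (hr : ∀ i, 0 ≤ r i)
    (hδ : 0 ≤ δ) (hrδ : ∀ i < n, r i ≤ δ) (hsum : ∑ i ∈ range n, r i < m * L) :
    ∃ K : ℕ → ℕ, Monotone K ∧ K 0 = 0 ∧ K m = n ∧
      ∀ j, ∑ i ∈ Ico (K j) (K (j + 1)), r i ≤ L + δ := by
  set s : ℕ → ℝ := fun t => ∑ i ∈ range t, r i
  have hs : Monotone s := fun a b hab =>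
    sum_le_sum_of_subset_of_nonneg (range_subset_range.mpr hab) fun i _ _ => hr i
  have hL : 0 ≤ L := (pos_of_mul_pos_right ((sum_nonneg fun i _ => hr i).trans_lt hsum)
    m.cast_nonneg).le
  set K : ℕ → ℕ := fun j => sInf {t | j * L ≤ s t ∨ n ≤ t}
  have hKmem (j : ℕ) : j * L ≤ s (K j) ∨ n ≤ K j :=
    Nat.sInf_mem (s := {t | j * L ≤ s t ∨ n ≤ t}) ⟨n, Or.inr le_rfl⟩
  have hKn (j : ℕ) : K j ≤ n := Nat.sInf_le (Or.inr le_rfl)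
  have hK : Monotone K := monotone_nat_of_le_succ fun j => Nat.sInf_le <|
    (hKmem (j + 1)).imp_left fun h => le_trans (by gcongr; simp) h
  refine ⟨K, hK, Nat.eq_zero_of_le_zero (Nat.sInf_le (Or.inl (by simp [s]))), ?_, fun j => ?_⟩
  · refine (hKn m).antisymm (not_lt.mp fun hlt => ?_)
    have := (hKmem m).resolve_right (not_le.mpr hlt)
    linarith [hs (hKn m)]
  rcases (hK j.le_succ).eq_or_lt with heq | hlt
  · simp [← heq]; linarith
  obtain ⟨k, hk⟩ := Nat.exists_eq_add_of_lt hlt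
  have hnot : ¬(((j + 1 : ℕ) : ℝ) * L ≤ s (K j + k) ∨ n ≤ K j + k) :=
    Nat.notMem_of_lt_sInf (s := {t | ((j + 1 : ℕ) : ℝ) * L ≤ s t ∨ n ≤ t})
      ((Nat.lt_succ_self _).trans_eq hk.symm)
  simp only [not_or, not_le, Nat.cast_succ] at hnot
  have hj : j * L ≤ s (K j) := (hKmem j).resolve_right (by omega)
  rw [hk, sum_Ico_succ_top (by omega), sum_Ico_eq_sub _ (by omega)]
  linarith [hrδ _ hnot.2]

lemma exists_subchain_sum_dist_le {X Y : Type*} [MetricSpace X] [MetricSpace Y] {f : X → Y}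
    (hf : LipschitzWith 1 f) {δ η L : ℝ} (hδ : 0 ≤ δ) (hη : 0 ≤ η)
    (huni : ∀ a b : X, edist a b ≤ pullEps f δ a b + ENNReal.ofReal η) {n m : ℕ} {c : ℕ → X}
    (hc : ∀ i < n, dist (c i) (c (i + 1)) ≤ δ)
    (hlen : ∑ i ∈ range n, dist (f (c i)) (f (c (i + 1))) < m * L) :
    ∃ K : ℕ → ℕ, K 0 = 0 ∧ K m = n ∧
      (∀ j < m, dist (c (K j)) (c (K (j + 1))) ≤ L + δ + η) ∧
      ∑ j ∈ range m, dist (c (K j)) (c (K (j + 1))) ≤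
        ∑ i ∈ range n, dist (f (c i)) (f (c (i + 1))) + m * η := by
  obtain ⟨K, hK, hK0, hKm, hblock⟩ := exists_monotone_sum_Ico_le (fun _ => dist_nonneg) hδ
    (fun i hi => (hf.dist_le_mul _ _).trans (by simpa using hc i hi)) hlen
  have hstep (j : ℕ) (hj : j < m) : dist (c (K j)) (c (K (j + 1))) ≤
      ∑ i ∈ Ico (K j) (K (j + 1)), dist (f (c i)) (f (c (i + 1))) + η :=
    dist_le_sum_Ico_dist_add huni hη (fun i hi => hc i (hi.trans_le (hKm ▸ hK hj)))
      (hK j.le_succ)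
  refine ⟨K, hK0, hKm, fun j hj => (hstep j hj).trans (by linarith [hblock j]), ?_⟩
  calc ∑ j ∈ range m, dist (c (K j)) (c (K (j + 1)))
      ≤ ∑ j ∈ range m, (∑ i ∈ Ico (K j) (K (j + 1)), dist (f (c i)) (f (c (i + 1))) + η) :=
        sum_le_sum fun j hj => hstep j (mem_range.mp hj)
    _ = ∑ i ∈ range n, dist (f (c i)) (f (c (i + 1))) + m * η := by
        rw [sum_add_distrib, sum_range_sum_Ico_of_monotone _ hK, hK0, hKm, range_eq_Ico]
        simp

/-- a compact metric space admitting an intrinsic isometry has a length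
(intrinsic) metric, in the chain formulation. -/
theorem intrinsicIsometry_implies_length {X Y : Type*} [MetricSpace X] [CompactSpace X]
    [MetricSpace Y] (f : X → Y) (hf : IsIntrinsicIsometry f) :
    ∀ x x' : X, ∀ ε > (0 : ℝ), ∃ (n : ℕ) (c : ℕ → X), c 0 = x ∧ c n = x' ∧
      (∀ i < n, dist (c i) (c (i + 1)) ≤ ε) ∧
      ∑ i ∈ Finset.range n, dist (c i) (c (i + 1)) ≤ dist x x' + ε := by
  intro x x' ε hε
  obtain ⟨m, hm⟩ := exists_nat_gt ((dist x x' + ε) / (ε / 2))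
  rw [div_lt_iff₀ (by positivity)] at hm
  set η := ε / 4 / (m + 1)
  have hη : 0 < η := by positivity
  have hmη : (m + 1) * η = ε / 4 := mul_div_cancel₀ _ (by positivity)
  have hηε : η ≤ ε / 4 := hmη ▸ le_mul_of_one_le_left hη.le (by simp)
  obtain ⟨δ, hδ, huni, hδε⟩ := ((hf.eventually_forall_edist_le_pullEps_add hη).and
    (eventually_le_nhds (by positivity : 0 < ε / 4))).exists_gt
  obtain ⟨n, c, ⟨hc0, hcn, hc⟩, hlen⟩ := hf.exists_isEpsChain_sum_dist_le hδ hη x x'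
  obtain ⟨K, hK0, hKm, hstep, hsum⟩ := exists_subchain_sum_dist_le hf.lipschitzWith hδ.le hη.le
    huni hc (m := m) (L := ε / 2) (by linarith)
  refine ⟨m, c ∘ K, by simp [hK0, hc0], by simp [hKm, hcn], fun j hj => ?_, hsum.trans ?_⟩
  · exact (hstep j hj).trans (by linarith)
  · linarith
end
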